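/- arXiv:math/9910096 — 2 statements merged into one kernel-verified Lean document; each statement's English description precedes it below -/
import Mathlib

section
/- With sin_q(z) = sum_{n≥0} (-1)^n q^(n^2) z^(2n+1)/[2n+1]_q! and cos_q(z) = sum_{n≥0} (-1)^n q^(n^2) z^(2n)/[2n]_q! over Q(q), the coefficient of z^(2n+1) in sin_{1/q}(z)·cos_q(z) equals (-1)^n q^(n(n+1)/2) / [2n+1]_q! · prod_{i=1}^{n} (1+q^i)^2. -/
noncomputable section
open Finset PowerSeries

abbrev Fq : Type := RatFunc ℚ

/-- The variable `q` as element of the field of rational functions `ℚ(q)`. -/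
def qv : Fq := RatFunc.X

/-- The q-integer `[m]_q = 1 + q + ... + q^(m-1)`. -/
def qInt (x : Fq) (m : ℕ) : Fq := ∑ i ∈ Finset.range m, x ^ i

/-- The q-factorial `[m]_q! = [1]_q [2]_q ⋯ [m]_q`. -/
def qFact (x : Fq) (m : ℕ) : Fq := ∏ i ∈ Finset.range m, qInt x (i + 1)

/-- `sin_q(z) = ∑ (-1)^n q^(n^2) z^(2n+1)/[2n+1]_q!`. -/
def qsin (x : Fq) : PowerSeries Fq :=
  PowerSeries.mk fun m =>
    if m % 2 = 1 then (-1 : Fq) ^ (m / 2) * x ^ ((m / 2) ^ 2) / qFact x m else 0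

/-- `cos_q(z) = ∑ (-1)^n q^(n^2) z^(2n)/[2n]_q!`. -/
def qcos (x : Fq) : PowerSeries Fq :=
  PowerSeries.mk fun m =>
    if m % 2 = 0 then (-1 : Fq) ^ (m / 2) * x ^ ((m / 2) ^ 2) / qFact x m else 0

/-!
Since `[m]_{1/q}! = q^(-m(m-1)/2) [m]_q!`, the coefficient is `(-1)^n q^(n(n+1)) / [2n+1]_q!` times
the odd part, at `t = q^(-n)`, of Cauchy's q-binomial sum
`∑_j q^(j(j-1)/2) [2n+1 choose j]_q t^j = ∏_{i=0}^{2n} (1 + q^i t)`.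
At `t = -q^(-n)` the product has the vanishing factor `i = n`, so the odd part is half the product
at `t = q^(-n)`, namely `∏_{|l| ≤ n} (1 + q^l) = 2 q^(-n(n+1)/2) ∏_{i=1}^n (1 + q^i)^2`.
-/

section QBinomial

variable {R : Type*} [CommSemiring R]

def qBinom (q : R) : ℕ → ℕ → R
  | _, 0 => 1
  | 0, _ + 1 => 0
  | m + 1, j + 1 => q ^ (j + 1) * qBinom q m (j + 1) + qBinom q m j

@[simp]
lemma qBinom_zero_right (q : R) (m : ℕ) : qBinom q m 0 = 1 := by
  cases m <;> rfl

lemma qBinom_succ_succ (q : R) (m j : ℕ) :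
    qBinom q (m + 1) (j + 1) = q ^ (j + 1) * qBinom q m (j + 1) + qBinom q m j :=
  rfl

lemma qBinom_eq_zero_of_lt (q : R) {m j : ℕ} (h : m < j) : qBinom q m j = 0 := by
  induction m generalizing j with
  | zero => obtain ⟨j, rfl⟩ := Nat.exists_eq_add_one_of_ne_zero (by omega : j ≠ 0); rfl
  | succ m ih =>
    obtain ⟨j, rfl⟩ := Nat.exists_eq_add_one_of_ne_zero (by omega : j ≠ 0)
    rw [qBinom_succ_succ, ih (by omega), ih (by omega), mul_zero, add_zero]

theorem prod_one_add_pow_mul_eq_sum_qBinom (q t : R) (m : ℕ) :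
    ∏ i ∈ range m, (1 + q ^ i * t) =
      ∑ j ∈ range (m + 1), q ^ j.choose 2 * qBinom q m j * t ^ j := by
  induction m generalizing t with
  | zero => simp
  | succ m ih =>
    set g : ℕ → R := fun j => q ^ j.choose 2 * qBinom q m j * (q * t) ^ j with hg
    have hlast : g (m + 1) = 0 := by simp [g, qBinom_eq_zero_of_lt q (Nat.lt_succ_self m)]
    have hterm (j : ℕ) : q ^ (j + 1).choose 2 * qBinom q (m + 1) (j + 1) * t ^ (j + 1) =
        g (j + 1) + t * g j := by
      simp only [hg, qBinom_succ_succ, Nat.choose_succ_succ', Nat.choose_one_right]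
      ring
    calc ∏ i ∈ range (m + 1), (1 + q ^ i * t)
        = (1 + t) * ∑ j ∈ range (m + 1), g j := by
          rw [prod_range_succ']
          simp only [pow_succ, mul_assoc]
          rw [ih (q * t), pow_zero, one_mul, mul_comm]
      _ = (∑ j ∈ range (m + 1), g (j + 1) + 1) + t * ∑ j ∈ range (m + 1), g j := by
          have hfirst : g 0 = 1 := by simp [g]
          have hshift : ∑ j ∈ range (m + 1), g (j + 1) + 1 = ∑ j ∈ range (m + 1), g j := by
            rw [← hfirst, ← sum_range_succ', sum_range_succ, hlast, add_zero]
          rw [hshift]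
          ring
      _ = _ := by
          rw [sum_range_succ' _ (m + 1), sum_congr rfl fun j _ => hterm j, sum_add_distrib,
            ← mul_sum]
          simp only [Nat.choose_zero_succ, pow_zero, qBinom_zero_right, mul_one]
          ring

end QBinomial

lemma sum_range_two_mul {M : Type*} [AddCommMonoid M] (f : ℕ → M) (n : ℕ) :
    ∑ i ∈ range (2 * n), f i = ∑ k ∈ range n, (f (2 * k) + f (2 * k + 1)) := by
  induction n with
  | zero => simp
  | succ n ih =>
    rw [mul_add, mul_one, sum_range_succ, sum_range_succ, sum_range_succ, ih, add_assoc]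

lemma sum_range_two_mul_sub_sum_neg {R : Type*} [CommRing R] (a : ℕ → R) (t : R) (n : ℕ) :
    ∑ j ∈ range (2 * n), a j * t ^ j - ∑ j ∈ range (2 * n), a j * (-t) ^ j =
      2 * ∑ k ∈ range n, a (2 * k + 1) * t ^ (2 * k + 1) := by
  rw [← sum_sub_distrib, sum_range_two_mul, mul_sum]
  refine sum_congr rfl fun k _ => ?_
  rw [(even_two_mul k).neg_pow, (odd_two_mul_add_one k).neg_pow]
  ring

section Field

variable {K : Type*} [Field K]

lemma prod_range_one_add_zpow {x : K} (hx : x ≠ 0) (n : ℕ) :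
    x ^ (n + 1).choose 2 * ∏ i ∈ range (2 * n + 1), (1 + x ^ ((i : ℤ) - n)) =
      2 * ∏ i ∈ Icc 1 n, (1 + x ^ i) ^ 2 := by
  induction n with
  | zero => norm_num
  | succ n ih =>
    rw [show 2 * (n + 1) + 1 = 2 * n + 1 + 1 + 1 by ring, prod_range_succ, prod_range_succ',
      prod_Icc_succ_top (by omega), Nat.choose_succ_succ' (n + 1), Nat.choose_one_right]
    have hmid : ∏ i ∈ range (2 * n + 1), (1 + x ^ (((i + 1 : ℕ) : ℤ) - (n + 1 : ℕ))) =
        ∏ i ∈ range (2 * n + 1), (1 + x ^ ((i : ℤ) - n)) := by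
      refine prod_congr rfl fun i _ => ?_
      push_cast; ring_nf
    rw [hmid]
    have htop : x ^ (((2 * n + 1 + 1 : ℕ) : ℤ) - (n + 1 : ℕ)) = x ^ (n + 1) := by
      rw [← zpow_natCast]; congr 1; push_cast; ring
    have hbot : x ^ (n + 1) * (1 + x ^ (((0 : ℕ) : ℤ) - (n + 1 : ℕ))) = 1 + x ^ (n + 1) := by
      rw [mul_add, mul_one, Nat.cast_zero, zero_sub, zpow_neg, zpow_natCast,
        mul_inv_cancel₀ (pow_ne_zero _ hx), add_comm]
    rw [htop, pow_add]
    linear_combination (1 + x ^ (n + 1)) ^ 2 * ih +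
      x ^ (n + 1).choose 2 * (∏ i ∈ range (2 * n + 1), (1 + x ^ ((i : ℤ) - n))) *
        (1 + x ^ (n + 1)) * hbot

theorem sum_odd_qBinom_mul_inv_pow [NeZero (2 : K)] {x : K} (hx : x ≠ 0) (n : ℕ) :
    x ^ (n + 1).choose 2 * ∑ k ∈ range (n + 1),
        x ^ (2 * k + 1).choose 2 * qBinom x (2 * n + 1) (2 * k + 1) * (x ^ n)⁻¹ ^ (2 * k + 1) =
      ∏ i ∈ Icc 1 n, (1 + x ^ i) ^ 2 := by
  have hodd := sum_range_two_mul_sub_sum_neg (fun j => x ^ j.choose 2 * qBinom x (2 * n + 1) j)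
    (x ^ n)⁻¹ (n + 1)
  rw [show 2 * (n + 1) = 2 * n + 1 + 1 by ring, ← prod_one_add_pow_mul_eq_sum_qBinom,
    ← prod_one_add_pow_mul_eq_sum_qBinom] at hodd
  have hvanish : ∏ i ∈ range (2 * n + 1), (1 + x ^ i * -(x ^ n)⁻¹) = 0 :=
    prod_eq_zero (mem_range.2 (by omega : n < 2 * n + 1))
      (by rw [mul_neg, mul_inv_cancel₀ (pow_ne_zero _ hx), add_neg_cancel])
  have hzpow : ∏ i ∈ range (2 * n + 1), (1 + x ^ i * (x ^ n)⁻¹) =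
      ∏ i ∈ range (2 * n + 1), (1 + x ^ ((i : ℤ) - n)) := by
    refine prod_congr rfl fun i _ => ?_
    rw [zpow_sub₀ hx, zpow_natCast, zpow_natCast, div_eq_mul_inv]
  apply mul_left_cancel₀ (two_ne_zero : (2 : K) ≠ 0)
  rw [← prod_range_one_add_zpow hx n, mul_left_comm, ← hodd, hvanish, sub_zero, hzpow]

end Field

lemma qInt_add (x : Fq) (a b : ℕ) : qInt x (a + b) = qInt x a + x ^ a * qInt x b := by
  simp only [qInt, sum_range_add, mul_sum, pow_add]

lemma qFact_succ (x : Fq) (m : ℕ) : qFact x (m + 1) = qFact x m * qInt x (m + 1) :=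
  prod_range_succ _ m

theorem qBinom_mul_qFact_mul_qFact (x : Fq) {m j : ℕ} (h : j ≤ m) :
    qBinom x m j * qFact x j * qFact x (m - j) = qFact x m := by
  induction m generalizing j with
  | zero =>
    rw [Nat.le_zero.1 h]
    simp [qFact]
  | succ m ih =>
    obtain _ | j := j
    · simp [qFact]
    have hlow : qBinom x m j * qFact x (j + 1) * qFact x (m - j) = qInt x (j + 1) * qFact x m := by
      rw [qFact_succ, ← ih (by omega : j ≤ m)]
      ring
    have hhigh : qBinom x m (j + 1) * qFact x (j + 1) * qFact x (m - j) =
        qInt x (m - j) * qFact x m := by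
      rcases (by omega : j < m ∨ j = m) with hj | rfl
      · obtain ⟨d, rfl⟩ : ∃ d, m = j + 1 + d := ⟨m - j - 1, by omega⟩
        rw [show j + 1 + d - j = d + 1 by omega, qFact_succ x d,
          ← ih (by omega : j + 1 ≤ j + 1 + d), show j + 1 + d - (j + 1) = d by omega]
        ring
      · simp [qBinom_eq_zero_of_lt x (Nat.lt_succ_self j), qInt]
    have hsplit : qInt x (m + 1) = qInt x (j + 1) + x ^ (j + 1) * qInt x (m - j) := by
      rw [← qInt_add]; congr 1; omega
    rw [Nat.add_sub_add_right, qBinom_succ_succ, qFact_succ x m]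
    linear_combination x ^ (j + 1) * hhigh + hlow - qFact x m * hsplit

lemma qInt_inv_mul_pow {x : Fq} (hx : x ≠ 0) (i : ℕ) :
    qInt x⁻¹ (i + 1) * x ^ i = qInt x (i + 1) := by
  rw [qInt, qInt, sum_mul, ← sum_range_reflect]
  refine sum_congr rfl fun j hj => ?_
  rw [Nat.add_sub_cancel, inv_pow, ← div_eq_inv_mul, div_eq_iff (pow_ne_zero _ hx), ← pow_add,
    Nat.add_sub_cancel' (Nat.lt_succ_iff.1 (mem_range.1 hj))]

lemma qFact_inv_mul_pow {x : Fq} (hx : x ≠ 0) (m : ℕ) :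
    qFact x⁻¹ m * x ^ m.choose 2 = qFact x m := by
  induction m with
  | zero => simp [qFact]
  | succ m ih =>
    rw [qFact_succ, qFact_succ, Nat.choose_succ_succ', Nat.choose_one_right, pow_add, ← ih,
      ← qInt_inv_mul_pow hx]
    ring

lemma qInt_qv_ne_zero {m : ℕ} (hm : m ≠ 0) : qInt qv m ≠ 0 := by
  have h : qInt qv m * (qv - 1) =
      algebraMap (Polynomial ℚ) Fq (Polynomial.X ^ m - Polynomial.C 1) := by
    simp [qInt, geom_sum_mul, qv]
  exact left_ne_zero_of_mul <|
    h ▸ RatFunc.algebraMap_ne_zero (Polynomial.X_pow_sub_C_ne_zero (Nat.pos_of_ne_zero hm) 1)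

lemma qFact_qv_ne_zero (m : ℕ) : qFact qv m ≠ 0 :=
  prod_ne_zero_iff.2 fun i _ => qInt_qv_ne_zero i.succ_ne_zero

lemma coeff_two_mul_add_one_mul_of_coeff_two_mul_eq_zero {R : Type*} [CommSemiring R]
    {f : PowerSeries R} (hf : ∀ k, coeff (2 * k) f = 0) (g : PowerSeries R) (n : ℕ) :
    coeff (2 * n + 1) (f * g) =
      ∑ k ∈ range (n + 1), coeff (2 * k + 1) f * coeff (2 * (n - k)) g := by
  rw [coeff_mul, Nat.sum_antidiagonal_eq_sum_range_succ_mk, Nat.succ_eq_add_one,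
    show 2 * n + 1 + 1 = 2 * (n + 1) by ring, sum_range_two_mul]
  refine sum_congr rfl fun k _ => ?_
  rw [hf, zero_mul, zero_add, show 2 * n + 1 - (2 * k + 1) = 2 * (n - k) by omega]

lemma coeff_qsin_two_mul (x : Fq) (k : ℕ) : coeff (2 * k) (qsin x) = 0 := by
  simp [qsin]

lemma coeff_qsin_two_mul_add_one (x : Fq) (k : ℕ) :
    coeff (2 * k + 1) (qsin x) = (-1) ^ k * x ^ (k ^ 2) / qFact x (2 * k + 1) := by
  rw [qsin, coeff_mk, if_pos (by omega), show (2 * k + 1) / 2 = k by omega]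

lemma coeff_qcos_two_mul (x : Fq) (k : ℕ) :
    coeff (2 * k) (qcos x) = (-1) ^ k * x ^ (k ^ 2) / qFact x (2 * k) := by
  rw [qcos, coeff_mk, if_pos (by omega), show 2 * k / 2 = k by omega]

lemma coeff_qsin_inv_mul_coeff_qcos {k n : ℕ} (hk : k ≤ n) :
    coeff (2 * k + 1) (qsin qv⁻¹) * coeff (2 * (n - k)) (qcos qv) =
      (-1) ^ n / qFact qv (2 * n + 1) * qv ^ (n * (n + 1)) *
        (qv ^ (2 * k + 1).choose 2 * qBinom qv (2 * n + 1) (2 * k + 1) *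
          (qv ^ n)⁻¹ ^ (2 * k + 1)) := by
  have hq : qv ≠ 0 := RatFunc.X_ne_zero
  obtain ⟨d, rfl⟩ : ∃ d, n = k + d := ⟨n - k, by omega⟩
  have hfact := qBinom_mul_qFact_mul_qFact qv (by omega : 2 * k + 1 ≤ 2 * (k + d) + 1)
  rw [show 2 * (k + d) + 1 - (2 * k + 1) = 2 * d by omega] at hfact
  have hinv : qFact qv⁻¹ (2 * k + 1) = qFact qv (2 * k + 1) / qv ^ (2 * k + 1).choose 2 :=
    eq_div_of_mul_eq (pow_ne_zero _ hq) (qFact_inv_mul_pow hq _)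
  have hchoose : (2 * k + 1).choose 2 = k * (2 * k + 1) := by
    rw [Nat.choose_two_right, Nat.add_sub_cancel]
    exact Nat.div_eq_of_eq_mul_left two_pos (by ring)
  have hB := left_ne_zero_of_mul (left_ne_zero_of_mul (hfact ▸ qFact_qv_ne_zero _))
  have hk₁ := qFact_qv_ne_zero (2 * k + 1)
  have hd := qFact_qv_ne_zero (2 * d)
  rw [coeff_qsin_two_mul_add_one, coeff_qcos_two_mul, Nat.add_sub_cancel_left, hinv, ← hfact,
    hchoose, inv_pow, inv_pow]
  field_simp
  ring

theorem coeff_sin_inv_q_mul_cos_q (n : ℕ) :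
    PowerSeries.coeff (R := Fq) (2 * n + 1) (qsin qv⁻¹ * qcos qv) =
      (-1 : Fq) ^ n * qv ^ (n * (n + 1) / 2) / qFact qv (2 * n + 1) *
        ∏ i ∈ Finset.Icc 1 n, (1 + qv ^ i) ^ 2 := by
  have hsplit : qv ^ (n * (n + 1)) = qv ^ (n * (n + 1) / 2) * qv ^ (n + 1).choose 2 := by
    have := (Nat.even_mul_succ_self n).two_dvd
    rw [← pow_add, Nat.choose_two_right, Nat.add_sub_cancel, mul_comm (n + 1)]
    congr 1
    omega
  rw [coeff_two_mul_add_one_mul_of_coeff_two_mul_eq_zero (coeff_qsin_two_mul _),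
    sum_congr rfl fun k hk => coeff_qsin_inv_mul_coeff_qcos (Nat.lt_succ_iff.1 (mem_range.1 hk)),
    ← mul_sum, mul_assoc, hsplit, mul_assoc, sum_odd_qBinom_mul_inv_pow RatFunc.X_ne_zero]
  ring
end
end

section
/- For every natural number n ≥ 1, sum_{k=0}^{floor((n-1)/2)} (1 - q^(2n-2k-1)) q^(k(2k+1)) / ([n-2k-1]_q! [2k+1]_q! prod_{i=1}^{n-1-2k}(1+q^i)) = sum_{k=0}^{floor(n/2)} (1 - q^(2n-2k)) q^(k(2k-1)) / ([n-2k]_q! [2k]_q! prod_{i=1}^{n-2k}(1+q^i)), as an identity of rational functions in q. -/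
/-!
Put `a_n(k) = (-1)^k q^(k choose 2) (1 - q^k p^(n-k)) / ((q;q)_k (p;p)_(n-k))` for independent
parameters `p` and `q`. Splitting `1 - q^k p^(n+1-k) = (1 - p^(n+1-k)) + p^(n+1-k) (1 - q^k)`, the
first part cancels the top factor of `(p;p)_(n+1-k)` and the second the top factor of `(q;q)_k`;
after shifting `k` in the second part the two recombine into `a_n`. Hence `∑_k a_n(k)` does not
depend on `n`, and it vanishes because `a_0(0) = 0`. For `p = q^2`, since
`(q;q)_m = (1 - q)^m [m]_q!` and `(q^2;q^2)_m = (q;q)_m ∏_{i ≤ m} (1 + q^i)`, multiplying by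
`(1 - q)^n` turns `a_n(2k)` into the `k`-th summand on the right of the theorem and `a_n(2k+1)`
into minus the `k`-th summand on the left.
-/

noncomputable section
open Finset PowerSeries

theorem sum_range_eq_sum_even_add_sum_odd {M : Type*} [AddCommMonoid M] (f : ℕ → M) (n : ℕ) :
    ∑ k ∈ range n, f k =
      ∑ k ∈ range ((n + 1) / 2), f (2 * k) + ∑ k ∈ range (n / 2), f (2 * k + 1) := by
  induction n with
  | zero => simp
  | succ n ih =>
    rw [sum_range_succ, ih]
    obtain ⟨m, rfl | rfl⟩ := Nat.even_or_odd' n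
    · rw [show (2 * m + 1 + 1) / 2 = m + 1 by omega, show (2 * m + 1) / 2 = m by omega,
        show 2 * m / 2 = m by omega, sum_range_succ, add_right_comm]
    · rw [show (2 * m + 1 + 1 + 1) / 2 = m + 1 by omega, show (2 * m + 1 + 1) / 2 = m + 1 by omega,
        show (2 * m + 1) / 2 = m by omega, sum_range_succ (fun k => f (2 * k + 1)), add_assoc]

section QPochhammer

variable {R : Type*} [CommRing R]

/-- The q-Pochhammer symbol `(q;q)_m`. -/
def qPochhammer (q : R) (m : ℕ) : R := ∏ i ∈ range m, (1 - q ^ (i + 1))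

theorem qPochhammer_succ (q : R) (m : ℕ) :
    qPochhammer q (m + 1) = qPochhammer q m * (1 - q ^ (m + 1)) :=
  prod_range_succ _ _

theorem qPochhammer_sq (q : R) (m : ℕ) :
    qPochhammer (q ^ 2) m = qPochhammer q m * ∏ i ∈ Icc 1 m, (1 + q ^ i) := by
  induction m with
  | zero => simp [qPochhammer]
  | succ m ih =>
    rw [qPochhammer_succ, qPochhammer_succ, ih, prod_Icc_succ_top (by omega)]
    ring

theorem one_sub_pow_ne_zero_of_not_isOfFinOrder {q : R} (hq : ¬IsOfFinOrder q) {m : ℕ}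
    (hm : m ≠ 0) : 1 - q ^ m ≠ 0 := fun h =>
  hq (isOfFinOrder_iff_pow_eq_one.2 ⟨m, Nat.pos_of_ne_zero hm, (sub_eq_zero.1 h).symm⟩)

theorem qPochhammer_ne_zero [IsDomain R] {q : R} (hq : ¬IsOfFinOrder q) (m : ℕ) :
    qPochhammer q m ≠ 0 :=
  prod_ne_zero_iff.2 fun i _ => one_sub_pow_ne_zero_of_not_isOfFinOrder hq i.succ_ne_zero

end QPochhammer

section AlternatingQTerm

variable {K : Type*} [Field K]

/-- For `p = q ^ 2` this is the summand
`(-1)^k q^(k(k-1)/2) (1 - q^(2n-k)) / ((q;q)_k (q^2;q^2)_(n-k))` of the reduced identity. -/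
def alternatingQTerm (p q : K) (n k : ℕ) : K :=
  (-1) ^ k * q ^ k.choose 2 * (1 - q ^ k * p ^ (n - k)) /
    (qPochhammer q k * qPochhammer p (n - k))

theorem neg_one_pow_mul_pow_choose_two_succ (q : K) (k : ℕ) :
    (-1) ^ (k + 1) * q ^ (k + 1).choose 2 = -(q ^ k * ((-1) ^ k * q ^ k.choose 2)) := by
  rw [Nat.choose_succ_succ', Nat.choose_one_right, pow_add, pow_succ]
  ring

theorem sum_alternatingQTerm_succ {p q : K} (hp : ¬IsOfFinOrder p) (hq : ¬IsOfFinOrder q)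
    (n : ℕ) :
    ∑ k ∈ range (n + 2), alternatingQTerm p q (n + 1) k =
      ∑ k ∈ range (n + 1), alternatingQTerm p q n k := by
  let c : ℕ → K := fun k => (-1) ^ k * q ^ k.choose 2
  let A : ℕ → K := fun k =>
    c k * (1 - p ^ (n + 1 - k)) / (qPochhammer q k * qPochhammer p (n + 1 - k))
  let B : ℕ → K := fun k =>
    c k * (p ^ (n + 1 - k) * (1 - q ^ k)) / (qPochhammer q k * qPochhammer p (n + 1 - k))
  have split (k : ℕ) : alternatingQTerm p q (n + 1) k = A k + B k := by
    rw [alternatingQTerm, ← add_div]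
    ring
  have merge (k : ℕ) (hk : k ≤ n) : A k + B (k + 1) = alternatingQTerm p q n k := by
    obtain ⟨m, rfl⟩ := Nat.exists_eq_add_of_le hk
    simp only [A, B, c, show k + m + 1 - k = m + 1 by omega, show k + m + 1 - (k + 1) = m by omega,
      show k + m - k = m by omega, neg_one_pow_mul_pow_choose_two_succ, qPochhammer_succ,
      alternatingQTerm]
    have hPq := qPochhammer_ne_zero hq k
    have hPp := qPochhammer_ne_zero hp m
    have hp' := one_sub_pow_ne_zero_of_not_isOfFinOrder hp m.succ_ne_zero
    have hq' := one_sub_pow_ne_zero_of_not_isOfFinOrder hq k.succ_ne_zero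
    field_simp
    ring
  calc ∑ k ∈ range (n + 2), alternatingQTerm p q (n + 1) k
      = (∑ k ∈ range (n + 1), A k + A (n + 1)) + (∑ k ∈ range (n + 1), B (k + 1) + B 0) := by
        rw [sum_congr rfl fun k _ => split k, sum_add_distrib, sum_range_succ A,
          sum_range_succ' B]
    -- the boundary terms `A (n + 1)` and `B 0` vanish
    _ = ∑ k ∈ range (n + 1), (A k + B (k + 1)) := by simp [A, B, sum_add_distrib]
    _ = ∑ k ∈ range (n + 1), alternatingQTerm p q n k :=
        sum_congr rfl fun k hk => merge k (Nat.lt_succ_iff.1 (mem_range.1 hk))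

theorem sum_alternatingQTerm_eq_zero {p q : K} (hp : ¬IsOfFinOrder p) (hq : ¬IsOfFinOrder q)
    (n : ℕ) : ∑ k ∈ range (n + 1), alternatingQTerm p q n k = 0 := by
  induction n with
  | zero => simp [alternatingQTerm]
  | succ n ih => rw [sum_alternatingQTerm_succ hp hq, ih]

end AlternatingQTerm

theorem qPochhammer_eq_one_sub_pow_mul_qFact (x : Fq) (m : ℕ) :
    qPochhammer x m = (1 - x) ^ m * qFact x m := by
  rw [qPochhammer, qFact, pow_eq_prod_const, ← prod_mul_distrib]
  exact prod_congr rfl fun i _ => (mul_neg_geom_sum x (i + 1)).symm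

theorem qv_not_isOfFinOrder : ¬IsOfFinOrder qv := fun h => by
  obtain ⟨m, hm, hqm⟩ := isOfFinOrder_iff_pow_eq_one.1 h
  have hX : (Polynomial.X : Polynomial ℚ) ^ m = 1 :=
    RatFunc.algebraMap_injective ℚ (by simpa [qv, RatFunc.algebraMap_X] using hqm)
  simpa [hm.ne'] using congrArg Polynomial.natDegree hX

theorem one_sub_pow_mul_alternatingQTerm_sq {n j : ℕ} (hj : j ≤ n) :
    (1 - qv) ^ n * alternatingQTerm (qv ^ 2) qv n j =
      (-1) ^ j * qv ^ j.choose 2 * (1 - qv ^ (2 * n - j)) /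
        (qFact qv (n - j) * qFact qv j * ∏ i ∈ Icc 1 (n - j), (1 + qv ^ i)) := by
  have hexp : qv ^ j * (qv ^ 2) ^ (n - j) = qv ^ (2 * n - j) := by
    rw [← pow_mul, ← pow_add]
    congr 1
    omega
  have hden : qPochhammer qv j * qPochhammer (qv ^ 2) (n - j) =
      (1 - qv) ^ n * (qFact qv (n - j) * qFact qv j * ∏ i ∈ Icc 1 (n - j), (1 + qv ^ i)) := by
    rw [qPochhammer_sq, qPochhammer_eq_one_sub_pow_mul_qFact, qPochhammer_eq_one_sub_pow_mul_qFact,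
      ← Nat.add_sub_cancel' hj, pow_add, Nat.add_sub_cancel_left]
    ring
  have hq : (1 - qv) ^ n ≠ 0 := pow_ne_zero _ <| by
    simpa using one_sub_pow_ne_zero_of_not_isOfFinOrder qv_not_isOfFinOrder one_ne_zero
  rw [alternatingQTerm, hexp, hden, mul_div_assoc', mul_div_mul_left _ _ hq]

theorem even_summand_eq {n k : ℕ} (hk : 2 * k ≤ n) :
    (1 - qv ^ (2 * n - 2 * k)) * qv ^ (k * (2 * k - 1)) /
        (qFact qv (n - 2 * k) * qFact qv (2 * k) * ∏ i ∈ Icc 1 (n - 2 * k), (1 + qv ^ i)) =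
      (1 - qv) ^ n * alternatingQTerm (qv ^ 2) qv n (2 * k) := by
  have hchoose : (2 * k).choose 2 = k * (2 * k - 1) := by
    rw [Nat.choose_two_right]
    exact Nat.div_eq_of_eq_mul_left two_pos (by ring)
  rw [one_sub_pow_mul_alternatingQTerm_sq hk, (even_two_mul k).neg_one_pow, hchoose]
  ring

theorem odd_summand_eq {n k : ℕ} (hk : 2 * k + 1 ≤ n) :
    (1 - qv ^ (2 * n - 2 * k - 1)) * qv ^ (k * (2 * k + 1)) /
        (qFact qv (n - 2 * k - 1) * qFact qv (2 * k + 1) *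
          ∏ i ∈ Icc 1 (n - 1 - 2 * k), (1 + qv ^ i)) =
      -((1 - qv) ^ n * alternatingQTerm (qv ^ 2) qv n (2 * k + 1)) := by
  have hchoose : (2 * k + 1).choose 2 = k * (2 * k + 1) := by
    rw [Nat.choose_two_right, Nat.add_sub_cancel]
    exact Nat.div_eq_of_eq_mul_left two_pos (by ring)
  rw [one_sub_pow_mul_alternatingQTerm_sq hk, (odd_two_mul_add_one k).neg_one_pow, hchoose,
    show 2 * n - (2 * k + 1) = 2 * n - 2 * k - 1 by omega,
    show n - (2 * k + 1) = n - 2 * k - 1 by omega, show n - 1 - 2 * k = n - 2 * k - 1 by omega]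
  ring

theorem odd_even_continuant_identity (n : ℕ) (hn : 1 ≤ n) :
    ∑ k ∈ Finset.range ((n - 1) / 2 + 1),
        (1 - qv ^ (2 * n - 2 * k - 1)) * qv ^ (k * (2 * k + 1)) /
          (qFact qv (n - 2 * k - 1) * qFact qv (2 * k + 1) *
            ∏ i ∈ Finset.Icc 1 (n - 1 - 2 * k), (1 + qv ^ i)) =
    ∑ k ∈ Finset.range (n / 2 + 1),
        (1 - qv ^ (2 * n - 2 * k)) * qv ^ (k * (2 * k - 1)) /
          (qFact qv (n - 2 * k) * qFact qv (2 * k) *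
            ∏ i ∈ Finset.Icc 1 (n - 2 * k), (1 + qv ^ i)) := by
  have hsum : ∑ j ∈ range (n + 1), (1 - qv) ^ n * alternatingQTerm (qv ^ 2) qv n j = 0 := by
    rw [← mul_sum, sum_alternatingQTerm_eq_zero
      (fun h => qv_not_isOfFinOrder (h.of_pow two_ne_zero)) qv_not_isOfFinOrder, mul_zero]
  have hsplit := sum_range_eq_sum_even_add_sum_odd
    (fun j => (1 - qv) ^ n * alternatingQTerm (qv ^ 2) qv n j) (n + 1)
  rw [hsum, show (n + 1 + 1) / 2 = n / 2 + 1 by omega,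
    show (n + 1) / 2 = (n - 1) / 2 + 1 by omega] at hsplit
  rw [sum_congr rfl fun k hk => odd_summand_eq (by have := mem_range.1 hk; omega),
    sum_congr rfl fun k hk => even_summand_eq (by have := mem_range.1 hk; omega), sum_neg_distrib]
  linear_combination hsplit
end
end
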